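/- Let n ≥ 2 and let h be the Hessenberg function on [n] with 1 ≤ h(1) ≤ n and h(j) = n for all 2 ≤ j ≤ n. Then P_h(q) = [h(1)]_q · [n−1]_q! + (n−1) · q^{h(1)−1} · [n−h(1)]_q · [n−2]_q!. -/

import Mathlib

open Finset Polynomial

/-- `ℓ_h(w) = #{(j,i) : j < i, w(j) > w(i), i ≤ h(j)}`. -/
def ellh {n : ℕ} (h : Fin n → Fin n) (w : Equiv.Perm (Fin n)) : ℕ :=
  (Finset.univ.filter
    (fun p : Fin n × Fin n => p.1 < p.2 ∧ w p.2 < w p.1 ∧ p.2 ≤ h p.1)).card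

/-- The Poincaré polynomial `P_h(q) = Σ_{w ∈ S_n} q^{ℓ_h(w)}` of `X(h)`. -/
noncomputable def Poin {n : ℕ} (h : Fin n → Fin n) : Polynomial ℤ :=
  ∑ w : Equiv.Perm (Fin n), Polynomial.X ^ ellh h w

/-- The q-integer `[m]_q = 1 + q + ⋯ + q^{m-1}`. -/
noncomputable def qInt (m : ℕ) : Polynomial ℤ := ∑ i ∈ Finset.range m, Polynomial.X ^ i

/-- The q-factorial `[m]_q! = [1]_q [2]_q ⋯ [m]_q`. -/
noncomputable def qFact : ℕ → Polynomial ℤ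
  | 0 => 1
  | m + 1 => qFact m * qInt (m + 1)

def hfun (n m : ℕ) : Fin (n+1) → Fin (n+1) :=
  fun j => if (j : ℕ) = 0 then ⟨min m n, by omega⟩ else Fin.last n

noncomputable def Fpoly (n m : ℕ) : Polynomial ℤ :=
  qInt (m+1) * qFact n + (n : Polynomial ℤ) * X ^ m * qInt (n - m) * qFact (n - 1)

lemma qInt_zero : qInt 0 = 0 := by simp [qInt]

lemma qInt_succ (k : ℕ) : qInt (k+1) = 1 + X * qInt k := by
  simp only [qInt, Finset.mul_sum]
  rw [Finset.sum_range_succ']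
  simp [pow_succ, mul_comm, add_comm]

lemma pow_eq_qInt (k : ℕ) : (X : Polynomial ℤ) ^ k = 1 + (X - 1) * qInt k := by
  have h := geom_sum_mul (X : Polynomial ℤ) k
  rw [qInt]; linear_combination -h

lemma qInt_add (a b : ℕ) : qInt (a + b) = qInt a + X ^ a * qInt b := by
  simp only [qInt, Finset.mul_sum]
  rw [Finset.sum_range_add]
  simp [pow_add]

lemma qFact_succ (k : ℕ) : qFact (k+1) = qFact k * qInt (k+1) := rfl

lemma nq (n : ℕ) : (n : Polynomial ℤ) * qInt n * qFact (n-1) = (n : Polynomial ℤ) * qFact n := by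
  cases n with
  | zero => simp
  | succ k => rw [Nat.add_sub_cancel, qFact_succ]; ring

lemma keyID (n m : ℕ) (hm : m ≤ n + 1) :
    Fpoly (n+1) m
      = qFact (n+1) + X * qInt m * Fpoly n (m-1) + X^m * qInt (n+1-m) * Fpoly n m := by
  rcases m with _ | j
  · -- m = 0
    simp only [Fpoly, Nat.zero_sub, Nat.sub_zero, Nat.add_sub_cancel, pow_zero, qInt_zero]
    rw [show (0:ℕ)+1 = 1 from rfl, show qInt 1 = 1 from by rw [qInt_succ, qInt_zero]; ring]
    have h1 := nq n
    push_cast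
    linear_combination -(qInt (n+1)) * h1
  · rcases Nat.lt_or_ge j n with hj | hj
    · -- 1 ≤ m = j+1 ≤ n
      obtain ⟨d, rfl⟩ : ∃ d, n = j + d + 1 := ⟨n - j - 1, by omega⟩
      simp only [Fpoly, Nat.add_sub_cancel]
      rw [show j + d + 1 + 1 - (j + 1) = d + 1 from by omega,
          show j + d + 1 - j = d + 1 from by omega,
          show j + d + 1 - (j + 1) = d from by omega]
      have E1 : qFact (j+d+1+1) = qFact (j+d) * qInt (j+d+1) * qInt (j+d+1+1) := by
        rw [qFact_succ (j+d+1), qFact_succ (j+d)]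
      have E2 : qFact (j+d+1) = qFact (j+d) * qInt (j+d+1) := qFact_succ _
      have E3 : qInt (j+d+1+1) = qInt (j+1) + X^(j+1) * qInt (d+1) := by
        rw [show j+d+1+1 = (j+1)+(d+1) from by omega, qInt_add]
      have E4 : qInt (j+d+1) = qInt (j+1) + X^(j+1) * qInt d := by
        rw [show j+d+1 = (j+1)+d from by omega, qInt_add]
      have E8 : (X:Polynomial ℤ)^(j+1) = X * (1 + (X-1)*qInt j) := by
        rw [pow_succ, pow_eq_qInt]; ring
      rw [E1, E2, E3, E4, qInt_succ (j+1), qInt_succ j, qInt_succ d, E8, pow_eq_qInt j]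
      push_cast
      ring
    · -- m = n + 1
      have hjn : j = n := by omega
      subst hjn
      simp only [Fpoly, Nat.add_sub_cancel, Nat.sub_self, qInt_zero,
        show j - (j+1) = 0 from by omega]
      rw [qFact_succ j, qInt_succ (j+1)]
      ring

def insPerm {n : ℕ} (p : Fin (n+1)) (u : Equiv.Perm (Fin n)) : Equiv.Perm (Fin (n+1)) :=
  (finSuccEquiv' p).trans (u.optionCongr.trans (finSuccEquiv n).symm)

lemma insPerm_apply_self {n : ℕ} (p : Fin (n+1)) (u : Equiv.Perm (Fin n)) :
    insPerm p u p = 0 := by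
  simp [insPerm, finSuccEquiv'_at, finSuccEquiv_symm_none]

lemma insPerm_apply_succAbove {n : ℕ} (p : Fin (n+1)) (u : Equiv.Perm (Fin n)) (i : Fin n) :
    insPerm p u (p.succAbove i) = (u i).succ := by
  simp [insPerm, finSuccEquiv'_succAbove, finSuccEquiv_symm_some]

lemma insPerm_bijective {n : ℕ} :
    Function.Bijective (fun pu : Fin (n+1) × Equiv.Perm (Fin n) => insPerm pu.1 pu.2) := by
  rw [Fintype.bijective_iff_injective_and_card]
  constructor
  · rintro ⟨p, u⟩ ⟨p', u'⟩ hEq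
    simp only at hEq
    have hp : p = p' := by
      have h1 : insPerm p u p = 0 := insPerm_apply_self p u
      have h2 : insPerm p' u' p' = 0 := insPerm_apply_self p' u'
      rw [hEq] at h1
      exact (insPerm p' u').injective (h1.trans h2.symm)
    subst hp
    have hu : u = u' := by
      ext i
      have h1 := insPerm_apply_succAbove p u i
      have h2 := insPerm_apply_succAbove p u' i
      rw [hEq] at h1
      exact congrArg Fin.val (Fin.succ_injective _ (h1.symm.trans h2))
    rw [hu]
  · simp [Fintype.card_perm, Fintype.card_prod, Nat.factorial_succ]

lemma coe_succAbove {n : ℕ} (p : Fin (n+1)) (c : Fin n) :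
    (p.succAbove c : ℕ) = if (c : ℕ) < (p : ℕ) then (c : ℕ) else (c : ℕ) + 1 := by
  rw [Fin.succAbove]
  split_ifs with h1 h2 h2
  · simp
  · exact absurd (by simpa [Fin.lt_def] using h1) h2
  · exact absurd (by simpa [Fin.lt_def] using h2) h1
  · simp

lemma coe_hfun (n m : ℕ) (j : Fin (n+1)) :
    ((hfun n m j : Fin (n+1)) : ℕ) = if (j : ℕ) = 0 then min m n else n := by
  unfold hfun
  split_ifs <;> simp [Fin.last]

theorem iffnat (n m : ℕ) (hm : m ≤ n + 1) (a b p : ℕ) (ha : a ≤ n) (hb : b ≤ n) (hp : p < n + 2) :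
    (((if b < p then b else b + 1) ≤
        if (if a < p then a else a + 1) = 0 then m ⊓ (n + 1) else n + 1) ↔
      b ≤ if a = 0 then (if p = 0 then n else if p ≤ m then m - 1 else m) ⊓ n else n) := by
  simp only [Nat.min_def]
  rcases Nat.lt_or_ge a p with h1 | h1
  · rw [if_pos h1]
    split_ifs <;> omega
  · rw [if_neg (by omega : ¬ a < p), if_neg (Nat.succ_ne_zero a)]
    constructor
    · intro _
      split_ifs <;> omega
    · intro _
      split_ifs <;> omega

lemma ellh_insPerm (n m : ℕ) (hm : m ≤ n + 1) (p : Fin (n+2)) (u : Equiv.Perm (Fin (n+1))) :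
    ellh (hfun (n+1) m) (insPerm p u)
      = (if (p:ℕ) = 0 then 0 else ((p:ℕ) - 1) + (if (p:ℕ) ≤ m then 1 else 0))
        + ellh (hfun n (if (p:ℕ) = 0 then n else if (p:ℕ) ≤ m then m - 1 else m)) u := by
  set w := insPerm p u with hw
  set h := hfun (n+1) m with hh
  set M := (if (p:ℕ) = 0 then n else if (p:ℕ) ≤ m then m - 1 else m) with hM
  set S := (Finset.univ.filter
    (fun q : Fin (n+2) × Fin (n+2) => q.1 < q.2 ∧ w q.2 < w q.1 ∧ q.2 ≤ h q.1)) with hS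
  have hsplit := Finset.card_filter_add_card_filter_not
    (s := S) (p := fun q => q.2 = p)
  have hwp : w p = 0 := insPerm_apply_self p u
  -- Part A
  have hA : (S.filter (fun q => q.2 = p)).card
      = (Finset.univ.filter (fun j : Fin (n+2) => j < p ∧ p ≤ h j)).card := by
    rw [show S.filter (fun q => q.2 = p)
        = (Finset.univ.filter (fun j : Fin (n+2) => j < p ∧ p ≤ h j)).image
            (fun j => (j, p)) from ?_]
    · rw [Finset.card_image_of_injective]
      intro x y hxy
      simpa using congrArg Prod.fst hxy
    · ext ⟨a, b⟩
      simp only [hS, Finset.mem_filter, Finset.mem_image, Finset.mem_univ, true_and,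
        Prod.mk.injEq]
      constructor
      · rintro ⟨⟨h1, h2, h3⟩, rfl⟩
        exact ⟨a, ⟨h1, h3⟩, rfl, rfl⟩
      · rintro ⟨j, ⟨h1, h3⟩, rfl, rfl⟩
        refine ⟨⟨h1, ?_, h3⟩, rfl⟩
        rw [hwp]
        rw [Fin.pos_iff_ne_zero]
        intro h0
        exact absurd ((insPerm p u).injective (h0.trans hwp.symm)) h1.ne
  have hAval : (Finset.univ.filter (fun j : Fin (n+2) => j < p ∧ p ≤ h j)).card
      = (if (p:ℕ) = 0 then 0 else ((p:ℕ) - 1) + (if (p:ℕ) ≤ m then 1 else 0)) := by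
    have hple : (p : ℕ) ≤ n + 1 := Fin.is_le p
    by_cases hp0 : (p : ℕ) = 0
    · have : ∀ j : Fin (n+2), ¬ (j < p ∧ p ≤ h j) := by
        rintro j ⟨h1, -⟩
        rw [Fin.lt_def, hp0] at h1; omega
      simp [Finset.filter_false_of_mem (fun j _ => this j), hp0]
    · by_cases hpm : (p : ℕ) ≤ m
      · have : Finset.univ.filter (fun j : Fin (n+2) => j < p ∧ p ≤ h j) = Finset.Iio p := by
          ext j
          simp only [Finset.mem_filter, Finset.mem_univ, true_and, Finset.mem_Iio,
            and_iff_left_iff_imp]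
          intro _
          rw [Fin.le_def, hh, coe_hfun]
          split_ifs <;> omega
        rw [this, Fin.card_Iio]
        simp [hp0, hpm]
        omega
      · have : Finset.univ.filter (fun j : Fin (n+2) => j < p ∧ p ≤ h j)
            = Finset.Ioo (0 : Fin (n+2)) p := by
          ext j
          simp only [Finset.mem_filter, Finset.mem_univ, true_and, Finset.mem_Ioo]
          rw [Fin.le_def, hh, coe_hfun, Fin.lt_def, Fin.lt_def, Fin.val_zero]
          constructor
          · rintro ⟨h1, h2⟩
            split_ifs at h2 with h3 <;> omega
          · rintro ⟨h1, h2⟩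
            refine ⟨h2, ?_⟩
            split_ifs with h3 <;> omega
        rw [this, Fin.card_Ioo]
        simp [hp0, hpm]
  -- Part B : the key condition equivalence
  have key : ∀ a b : Fin (n+1),
      (p.succAbove a < p.succAbove b ∧ w (p.succAbove b) < w (p.succAbove a)
        ∧ p.succAbove b ≤ h (p.succAbove a))
      ↔ (a < b ∧ u b < u a ∧ b ≤ hfun n M a) := by
    intro a b
    have ha := Fin.is_le a
    have hb := Fin.is_le b
    have hple : (p : ℕ) ≤ n + 1 := Fin.is_le p
    apply and_congr
    · exact Fin.succAbove_lt_succAbove_iff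
    apply and_congr
    · rw [hw, insPerm_apply_succAbove, insPerm_apply_succAbove, Fin.succ_lt_succ_iff]
    · rw [Fin.le_def, Fin.le_def, hh, coe_hfun, coe_hfun, coe_succAbove, coe_succAbove, hM]
      exact iffnat n m hm a b p (Fin.is_le a) (Fin.is_le b) (Fin.is_lt p)
  have hB : (S.filter (fun q => ¬ q.2 = p)).card = ellh (hfun n M) u := by
    rw [ellh]
    symm
    apply Finset.card_bij (fun (q : Fin (n+1) × Fin (n+1)) _ => (p.succAbove q.1, p.succAbove q.2))
    · rintro ⟨a, b⟩ hab
      simp only [Finset.mem_filter, Finset.mem_univ, true_and] at hab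
      simp only [hS, Finset.mem_filter, Finset.mem_univ, true_and]
      exact ⟨(key a b).2 hab, Fin.succAbove_ne p b⟩
    · rintro ⟨a, b⟩ _ ⟨a', b'⟩ _ hEq
      simp only [Prod.mk.injEq] at hEq
      have e1 := Fin.succAbove_right_injective (p := p) hEq.1
      have e2 := Fin.succAbove_right_injective (p := p) hEq.2
      simp [Prod.ext_iff, e1, e2]
    · rintro ⟨x, y⟩ hxy
      simp only [hS, Finset.mem_filter, Finset.mem_univ, true_and] at hxy
      obtain ⟨⟨h1, h2, h3⟩, hyp⟩ := hxy
      have hxp : x ≠ p := by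
        intro hx
        rw [hx, hwp] at h2
        exact absurd h2 (Fin.not_lt_zero _)
      obtain ⟨a, rfl⟩ := Fin.exists_succAbove_eq hxp
      obtain ⟨b, rfl⟩ := Fin.exists_succAbove_eq hyp
      refine ⟨(a, b), ?_, rfl⟩
      simp only [Finset.mem_filter, Finset.mem_univ, true_and]
      exact (key a b).1 ⟨h1, h2, h3⟩
  rw [ellh, ← hS, ← hsplit, hA, hAval, hB]

lemma sum_g (n m : ℕ) (hm : m ≤ n + 1) (F : ℕ → Polynomial ℤ) :
    ∑ k ∈ Finset.range (n+2),
      (X ^ (if k = 0 then 0 else (k - 1) + (if k ≤ m then 1 else 0)) : Polynomial ℤ)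
        * F (if k = 0 then n else if k ≤ m then m - 1 else m)
    = F n + (X * qInt m) * F (m-1) + (X^m * qInt (n+1-m)) * F m := by
  rw [Finset.range_eq_Ico,
     ← Finset.sum_Ico_consecutive _ (by omega : 0 ≤ m+1) (by omega : m+1 ≤ n+2),
     ← Finset.sum_Ico_consecutive _ (by omega : 0 ≤ 1) (by omega : 1 ≤ m+1)]
  congr 1
  · congr 1
    · -- Ico 0 1 sum = F n
      rw [show Finset.Ico 0 1 = {0} from rfl]
      simp
    · -- Ico 1 (m+1)
      rw [Finset.sum_congr rfl (g := fun k => (X:Polynomial ℤ)^k * F (m-1)) ?_]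
      · rw [← Finset.sum_mul]
        congr 1
        rw [Finset.sum_Ico_eq_sum_range]
        simp only [Nat.add_sub_cancel]
        rw [qInt, Finset.mul_sum]
        apply Finset.sum_congr rfl
        intro i _
        rw [show 1 + i = i + 1 from by omega, pow_succ]
        ring
      · intro k hk
        rw [Finset.mem_Ico] at hk
        rw [if_neg (by omega), if_pos (by omega), if_neg (by omega), if_pos (by omega),
          show k - 1 + 1 = k from by omega]
  · -- Ico (m+1) (n+2)
    rw [Finset.sum_congr rfl (g := fun k => (X:Polynomial ℤ)^(k-1) * F m) ?_]
    · rw [← Finset.sum_mul]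
      congr 1
      rw [Finset.sum_Ico_eq_sum_range]
      rw [show n + 2 - (m+1) = n + 1 - m from by omega]
      rw [qInt, Finset.mul_sum]
      apply Finset.sum_congr rfl
      intro i _
      rw [show m + 1 + i - 1 = m + i from by omega, pow_add]
    · intro k hk
      rw [Finset.mem_Ico] at hk
      rw [if_neg (by omega), if_neg (by omega), if_neg (by omega), if_neg (by omega)]
      simp

lemma Fpoly_nn (n : ℕ) : Fpoly n n = qFact (n+1) := by
  simp only [Fpoly, Nat.sub_self, qInt_zero]
  rw [qFact_succ]
  ring

lemma poin_hfun (n : ℕ) : ∀ m, m ≤ n → Poin (hfun n m) = Fpoly n m := by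
  induction n with
  | zero =>
    intro m hm
    interval_cases m
    have he : ∀ w : Equiv.Perm (Fin 1), ellh (hfun 0 0) w = 0 := by
      intro w
      rw [ellh, Finset.card_eq_zero, Finset.filter_eq_empty_iff]
      rintro ⟨a, b⟩ -
      simp only [not_and]
      intro hab
      have h1 := a.is_lt
      have h2 := b.is_lt
      rw [Fin.lt_def] at hab
      omega
    simp [Poin, he, Fpoly, qFact, qInt]
  | succ n ih =>
    intro m hm
    have e1 : Poin (hfun (n+1) m) = ∑ pu : Fin (n+2) × Equiv.Perm (Fin (n+1)),
        X ^ ellh (hfun (n+1) m) (insPerm pu.1 pu.2) := by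
      rw [Poin]
      exact (Fintype.sum_bijective _ insPerm_bijective _ _ (fun pu => rfl)).symm
    rw [e1, Fintype.sum_prod_type]
    have e3 : ∀ p : Fin (n+2),
        (∑ u : Equiv.Perm (Fin (n+1)), (X:Polynomial ℤ) ^ ellh (hfun (n+1) m) (insPerm p u))
        = X ^ (if (p:ℕ) = 0 then 0 else ((p:ℕ)-1) + (if (p:ℕ) ≤ m then 1 else 0))
          * Fpoly n (if (p:ℕ) = 0 then n else if (p:ℕ) ≤ m then m-1 else m) := by
      intro p
      rw [← ih (if (p:ℕ) = 0 then n else if (p:ℕ) ≤ m then m-1 else m)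
          (by split_ifs <;> omega), Poin, Finset.mul_sum]
      apply Finset.sum_congr rfl
      intro u _
      rw [ellh_insPerm n m hm p u, pow_add]
    rw [Finset.sum_congr rfl (fun p _ => e3 p)]
    rw [Fin.sum_univ_eq_sum_range (fun k =>
      (X:Polynomial ℤ) ^ (if k = 0 then 0 else (k-1) + (if k ≤ m then 1 else 0))
        * Fpoly n (if k = 0 then n else if k ≤ m then m-1 else m)) (n+2)]
    rw [sum_g n m hm (Fpoly n), Fpoly_nn, keyID n m hm]

/-- let `n ≥ 2` and let `h` be the Hessenberg function with `1 ≤ h(1) ≤ n`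
arbitrary and `h(j) = n` for `2 ≤ j ≤ n`.  Then
`P_h(q) = [h(1)]_q [n−1]_q! + (n−1) q^{h(1)−1} [n−h(1)]_q [n−2]_q!`.
In 0-based form `h(1)` is `(h ⟨0,_⟩ : ℕ) + 1` and the condition on `h` is
`(h j : ℕ) = n - 1` for all `j` with `1 ≤ (j : ℕ)`. -/
theorem poincare_h1_formula (n : ℕ) (hn : 2 ≤ n) (h : Fin n → Fin n)
    (hval : ∀ j : Fin n, 1 ≤ (j : ℕ) → (h j : ℕ) = n - 1) :
    Poin h =
      qInt ((h ⟨0, by omega⟩ : ℕ) + 1) * qFact (n - 1)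
      + ((n - 1 : ℕ) : Polynomial ℤ) * Polynomial.X ^ ((h ⟨0, by omega⟩ : ℕ))
          * qInt (n - ((h ⟨0, by omega⟩ : ℕ) + 1)) * qFact (n - 2) := by
  rcases n with _ | k
  · omega
  have key : ∀ (pf : (0:ℕ) < k+1), Poin h = qInt ((h ⟨0,pf⟩ : ℕ) + 1) * qFact (k+1-1)
      + ((k+1-1 : ℕ) : Polynomial ℤ) * Polynomial.X ^ ((h ⟨0,pf⟩ : ℕ))
        * qInt (k+1 - ((h ⟨0,pf⟩ : ℕ)+1)) * qFact (k+1-2) := by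
    intro pf
    set v := (h ⟨0, pf⟩ : ℕ) with hv
    have hvle : v ≤ k := Fin.is_le _
    have hh : h = hfun k v := by
      funext j
      by_cases hj : (j : ℕ) = 0
      · have hj0 : j = ⟨0, pf⟩ := Fin.ext hj
        rw [hj0]
        apply Fin.ext
        rw [coe_hfun, ← hv]
        simp [min_eq_left hvle]
      · apply Fin.ext
        rw [hval j (by omega), coe_hfun, if_neg hj]
        omega
    rw [hh, poin_hfun k v hvle]
    rw [show k + 1 - 1 = k from by omega, show k + 1 - 2 = k - 1 from by omega,
        show k + 1 - (v + 1) = k - v from by omega]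
    rfl
  exact key (by omega)
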